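/- arXiv:2106.03550 — 3 statements merged into one kernel-verified Lean document; each statement's English description precedes it below -/
import Mathlib

section
/- There are no positive integers x, y, z such that z^4 - y^4 = x^2. -/
private lemma pow_split {a b c : ℕ} (k : ℕ) (h : Nat.Coprime a b) (heq : a * b = c ^ k) :
    ∃ d, a = d ^ k :=
  exists_eq_pow_of_mul_eq_pow (Nat.isUnit_iff.mpr h) heq

private lemma sqpar (x : ℕ) : x ^ 2 % 2 = x % 2 := by
  rcases Nat.even_or_odd x with ⟨k, hk⟩ | ⟨k, hk⟩
  · subst hk; have : (k + k) ^ 2 = 2 * (2 * k ^ 2) := by ring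
    omega
  · subst hk; have : (2 * k + 1) ^ 2 = 2 * (2 * k ^ 2 + 2 * k) + 1 := by ring
    omega

private lemma sq_mod4 (x : ℕ) : (x % 2 = 0 → x ^ 2 % 4 = 0) ∧ (x % 2 = 1 → x ^ 2 % 4 = 1) := by
  rcases Nat.even_or_odd x with ⟨k, hk⟩ | ⟨k, hk⟩
  · subst hk; have : (k + k) ^ 2 = 4 * k ^ 2 := by ring
    omega
  · subst hk; have : (2 * k + 1) ^ 2 = 4 * (k ^ 2 + k) + 1 := by ring
    omega

private lemma coprime_aux {a b : ℕ} (h : ∀ p, p.Prime → p ∣ a → p ∣ b → False) :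
    Nat.Coprime a b := by
  by_contra hg
  obtain ⟨p, hp, hpd⟩ := Nat.exists_prime_and_dvd hg
  exact h p hp (hpd.trans (Nat.gcd_dvd_left a b)) (hpd.trans (Nat.gcd_dvd_right a b))

private lemma prime_not_dvd_one {p : ℕ} (hp : p.Prime) (h : p ∣ 1) : False := by
  have := Nat.dvd_one.mp h; exact hp.one_lt.ne' this

private lemma aux_step (z m n : ℕ) (hm : 0 < m) (hn : n % 2 = 1)
    (hz : z ^ 2 = 4 * m ^ 4 + n ^ 4) (hco : Nat.Coprime m n) :
    ∃ e f, 0 < e ∧ n ^ 2 + e ^ 4 = f ^ 4 ∧ f < z := by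
  have hm4 : 0 < m ^ 4 := pow_pos hm 4
  have hn2 : n ^ 2 % 2 = 1 := by have := sqpar n; omega
  have hn4 : n ^ 4 % 2 = 1 := by
    have h1 := sqpar (n ^ 2); have h2 : (n ^ 2) ^ 2 = n ^ 4 := by ring
    omega
  have hzodd : z % 2 = 1 := by have := sqpar z; omega
  have hnz : n ^ 2 < z := by
    by_contra hcon
    push_neg at hcon
    have h2 : z * z ≤ n ^ 2 * n ^ 2 := Nat.mul_le_mul hcon hcon
    nlinarith
  obtain ⟨ρ, hρ, hρpos⟩ : ∃ ρ, z = n ^ 2 + 2 * ρ ∧ 0 < ρ := ⟨(z - n ^ 2) / 2, by omega⟩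
  have hprod : ρ * (n ^ 2 + ρ) = m ^ 4 := by
    have e1 : (n ^ 2 + 2 * ρ) ^ 2 = n ^ 4 + 4 * (ρ * (n ^ 2 + ρ)) := by ring
    rw [hρ] at hz
    omega
  have hcop : Nat.Coprime ρ (n ^ 2 + ρ) := by
    apply coprime_aux
    intro p hp h1 h2
    have hpn2 : p ∣ n ^ 2 := by
      have := Nat.dvd_sub h2 h1
      simpa using this
    have hpn : p ∣ n := hp.dvd_of_dvd_pow hpn2
    have hpz : p ∣ z := by rw [hρ]; exact Nat.dvd_add hpn2 (Dvd.dvd.mul_left h1 2)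
    have hp2 : p ≠ 2 := by rintro rfl; omega
    have hp4m : p ∣ 4 * m ^ 4 := by
      have hd1 : p ∣ z ^ 2 := Dvd.dvd.pow hpz (by norm_num)
      have hd2 : p ∣ n ^ 4 := Dvd.dvd.pow hpn (by norm_num)
      have : z ^ 2 - n ^ 4 = 4 * m ^ 4 := by omega
      exact this ▸ Nat.dvd_sub hd1 hd2
    have hpm : p ∣ m := by
      rcases (Nat.Prime.dvd_mul hp).mp hp4m with h4 | hm4'
      · exfalso
        have : p ∣ 2 := (Nat.Prime.dvd_of_dvd_pow hp (show p ∣ 2 ^ 2 by norm_num at h4 ⊢; exact h4))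
        have := (Nat.prime_dvd_prime_iff_eq hp Nat.prime_two).mp this
        exact hp2 this
      · exact hp.dvd_of_dvd_pow hm4'
    exact prime_not_dvd_one hp (Nat.dvd_gcd hpm hpn |>.trans (by rw [hco]))
  obtain ⟨e, he⟩ := pow_split 4 hcop hprod
  obtain ⟨f, hf⟩ := pow_split 4 hcop.symm (by rw [mul_comm]; exact hprod)
  refine ⟨e, f, ?_, ?_, ?_⟩
  · rcases Nat.eq_zero_or_pos e with rfl | h
    · simp at he; omega
    · exact h
  · omega
  · have h1 : f ≤ f ^ 4 := Nat.le_self_pow (by norm_num) f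
    omega

private lemma descent : ∀ z x y : ℕ, 0 < x → 0 < y → x ^ 2 + y ^ 4 = z ^ 4 → False := by
  intro z
  induction z using Nat.strong_induction_on with
  | _ z IH =>
  intro x y hx hy h
  have hx2 : 0 < x ^ 2 := pow_pos hx 2
  have hy4 : 0 < y ^ 4 := pow_pos hy 4
  have hz : 0 < z := by
    rcases Nat.eq_zero_or_pos z with rfl | h'
    · simp at h; omega
    · exact h'
  have hyz : y < z := by
    by_contra hcon
    push_neg at hcon
    have := Nat.pow_le_pow_left hcon 4
    omega
  -- reduce to coprime case
  by_cases hd1 : Nat.gcd y z = 1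
  case neg =>
    set d := Nat.gcd y z with hd
    have hdpos : 0 < d := Nat.gcd_pos_of_pos_right y hz
    have hd2 : 2 ≤ d := by omega
    obtain ⟨y', hy'⟩ := Nat.gcd_dvd_left y z
    obtain ⟨z', hz'⟩ := Nat.gcd_dvd_right y z
    have hdy4 : d ^ 4 ∣ y ^ 4 := pow_dvd_pow_of_dvd ⟨y', hy'⟩ 4
    have hdz4 : d ^ 4 ∣ z ^ 4 := pow_dvd_pow_of_dvd ⟨z', hz'⟩ 4
    have hdx2 : (d ^ 2) ^ 2 ∣ x ^ 2 := by
      have : d ^ 4 ∣ x ^ 2 := by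
        have e : x ^ 2 = z ^ 4 - y ^ 4 := by omega
        rw [e]; exact Nat.dvd_sub hdz4 hdy4
      have e2 : (d ^ 2) ^ 2 = d ^ 4 := by ring
      rwa [e2]
    have hdx : d ^ 2 ∣ x := (Nat.pow_dvd_pow_iff (by norm_num)).mp hdx2
    obtain ⟨x', hx'⟩ := hdx
    have hz'lt : z' < z := by
      rcases Nat.eq_zero_or_pos z' with rfl | hz'p
      · simp at hz'; omega
      · calc z' < d * z' := by nlinarith
        _ = z := hz'.symm
    have heq' : x' ^ 2 + y' ^ 4 = z' ^ 4 := by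
      have e : (d ^ 2 * x') ^ 2 + (d * y') ^ 4 = (d * z') ^ 4 := by
        rw [← hx', ← hy', ← hz']; exact h
    -- cancel d^4
      have e2 : d ^ 4 * (x' ^ 2 + y' ^ 4) = d ^ 4 * z' ^ 4 := by
        have r1 : (d ^ 2 * x') ^ 2 = d ^ 4 * x' ^ 2 := by ring
        have r2 : (d * y') ^ 4 = d ^ 4 * y' ^ 4 := by ring
        have r3 : (d * z') ^ 4 = d ^ 4 * z' ^ 4 := by ring
        rw [r1, r2, r3] at e
        linarith
      exact Nat.eq_of_mul_eq_mul_left (pow_pos hdpos 4) e2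
    have hx'p : 0 < x' := by
      rcases Nat.eq_zero_or_pos x' with rfl | h'
      · simp at hx'; omega
      · exact h'
    have hy'p : 0 < y' := by
      rcases Nat.eq_zero_or_pos y' with rfl | h'
      · simp at hy'; omega
      · exact h'
    exact IH z' hz'lt x' y' hx'p hy'p heq'
  case pos =>
  have hcozy : Nat.Coprime y z := hd1
  -- z is odd
  have hy2par := sqpar y
  have hz2par := sqpar z
  have hy4e : y ^ 4 = (y ^ 2) ^ 2 := by ring
  have hz4e : z ^ 4 = (z ^ 2) ^ 2 := by ring
  have hzodd : z % 2 = 1 := by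
    by_contra hcon
    have hze : z % 2 = 0 := by omega
    have hyodd : y % 2 = 1 := by
      by_contra hcon2
      have hye : y % 2 = 0 := by omega
      have : (2 : ℕ) ∣ Nat.gcd y z := Nat.dvd_gcd (by omega) (by omega)
      omega
    have h1 : y ^ 4 % 4 = 1 := ((sq_mod4 (y ^ 2)).2 (by have := sqpar y; omega)).symm ▸ by
      have := (sq_mod4 (y ^ 2)).2 (by have := sqpar y; omega); omega
    have h2 : z ^ 4 % 4 = 0 := by
      have := (sq_mod4 (z ^ 2)).1 (by have := sqpar z; omega); omega
    have h3 := (sq_mod4 x).1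
    have h4 := (sq_mod4 x).2
    omega
  have hz2odd : z ^ 2 % 2 = 1 := by omega
  have hy2lt : y ^ 2 < z ^ 2 := by
    have := Nat.pow_lt_pow_left hyz (n := 2) (by norm_num)
    exact this
  rcases Nat.even_or_odd y with hyev | hyodd'
  case inr =>
    -- y odd case
    have hyodd : y % 2 = 1 := Nat.odd_iff.mp hyodd'
    have hy2odd : y ^ 2 % 2 = 1 := by omega
    obtain ⟨A, hA, hApos⟩ : ∃ A, z ^ 2 = y ^ 2 + 2 * A ∧ 0 < A :=
      ⟨(z ^ 2 - y ^ 2) / 2, by omega⟩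
    have hx4 : x ^ 2 = 4 * (A * (y ^ 2 + A)) := by
      have e1 : (y ^ 2 + 2 * A) ^ 2 = (y ^ 2) ^ 2 + 4 * (A * (y ^ 2 + A)) := by ring
      rw [hz4e, hA] at h
      rw [hy4e] at h
      omega
    have hxe : x % 2 = 0 := by
      have h3 := (sq_mod4 x).2
      omega
    obtain ⟨x₀, hx₀⟩ : ∃ x₀, x = 2 * x₀ := ⟨x / 2, by omega⟩
    have hx₀2 : A * (y ^ 2 + A) = x₀ ^ 2 := by
      have e : (2 * x₀) ^ 2 = 4 * x₀ ^ 2 := by ring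
      rw [hx₀] at hx4
      omega
    have hcopAB : Nat.Coprime A (y ^ 2 + A) := by
      apply coprime_aux
      intro p hp h1 h2
      have hpy2 : p ∣ y ^ 2 := by
        have := Nat.dvd_sub h2 h1
        simpa using this
      have hpz2 : p ∣ z ^ 2 := by
        rw [hA]; exact Nat.dvd_add hpy2 (Dvd.dvd.mul_left h1 2)
      have hpy : p ∣ y := hp.dvd_of_dvd_pow hpy2
      have hpz : p ∣ z := hp.dvd_of_dvd_pow hpz2
      exact prime_not_dvd_one hp (Nat.dvd_gcd hpy hpz |>.trans (by rw [hcozy]))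
    obtain ⟨u, hu⟩ := pow_split 2 hcopAB hx₀2
    obtain ⟨v, hv⟩ := pow_split 2 hcopAB.symm (by rw [mul_comm]; exact hx₀2)
    have hupos : 0 < u := by
      rcases Nat.eq_zero_or_pos u with rfl | h'
      · simp at hu; omega
      · exact h'
    have hvz : v < z := by
      by_contra hcon
      push_neg at hcon
      have := Nat.pow_le_pow_left hcon 2
      omega
    have hnew : (y * z) ^ 2 + u ^ 4 = v ^ 4 := by
      have e1 : (y * z) ^ 2 = y ^ 2 * z ^ 2 := by ring
      have e2 : u ^ 4 = (u ^ 2) ^ 2 := by ring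
      have e3 : v ^ 4 = (v ^ 2) ^ 2 := by ring
      rw [e1, e2, e3, ← hu, ← hv, hA]
      ring
    exact IH v hvz (y * z) u (by positivity) hupos hnew
  case inl =>
    -- y even case
    have hye : y % 2 = 0 := Nat.even_iff.mp hyev
    have hy2e : y ^ 2 % 2 = 0 := by omega
    obtain ⟨C, hC, hCpos⟩ : ∃ C, z ^ 2 = y ^ 2 + C ∧ 0 < C :=
      ⟨z ^ 2 - y ^ 2, by omega⟩
    have hCodd : C % 2 = 1 := by omega
    have hx2eq : C * (2 * y ^ 2 + C) = x ^ 2 := by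
      have e1 : (y ^ 2 + C) ^ 2 = (y ^ 2) ^ 2 + C * (2 * y ^ 2 + C) := by ring
      rw [hz4e, hC] at h
      rw [hy4e] at h
      omega
    have hcopC : Nat.Coprime C (2 * y ^ 2 + C) := by
      apply coprime_aux
      intro p hp h1 h2
      have hp2y2 : p ∣ 2 * y ^ 2 := by
        have := Nat.dvd_sub h2 h1
        simpa using this
      have hpodd : p ≠ 2 := by
        rintro rfl
        omega
      have hpy2 : p ∣ y ^ 2 := by
        rcases (Nat.Prime.dvd_mul hp).mp hp2y2 with h' | h'
        · exact absurd ((Nat.prime_dvd_prime_iff_eq hp Nat.prime_two).mp h') hpodd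
        · exact h'
      have hpz2 : p ∣ z ^ 2 := by rw [hC]; exact Nat.dvd_add hpy2 h1
      have hpy : p ∣ y := hp.dvd_of_dvd_pow hpy2
      have hpz : p ∣ z := hp.dvd_of_dvd_pow hpz2
      exact prime_not_dvd_one hp (Nat.dvd_gcd hpy hpz |>.trans (by rw [hcozy]))
    obtain ⟨s, hs⟩ := pow_split 2 hcopC hx2eq
    obtain ⟨t, ht⟩ := pow_split 2 hcopC.symm (by rw [mul_comm]; exact hx2eq)
    have hsodd : s % 2 = 1 := by have := sqpar s; omega
    have htodd : t % 2 = 1 := by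
      have := sqpar t
      have : t ^ 2 % 2 = 1 := by omega
      have h2 := sqpar t; omega
    have hy2pos : 0 < y ^ 2 := pow_pos hy 2
    have hst : s < t := by
      by_contra hcon
      push_neg at hcon
      have := Nat.pow_le_pow_left hcon 2
      omega
    obtain ⟨α, hα, hαpos⟩ : ∃ α, t = s + 2 * α ∧ 0 < α := ⟨(t - s) / 2, by omega⟩
    obtain ⟨w, hw, hwpos⟩ : ∃ w, y = 2 * w ∧ 0 < w := ⟨y / 2, by omega⟩
    have hαβ : α * (s + α) = 2 * w ^ 2 := by
      have e1 : (s + 2 * α) ^ 2 = s ^ 2 + 4 * (α * (s + α)) := by ring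
      have e2 : 2 * (2 * w) ^ 2 = 8 * w ^ 2 := by ring
      rw [hα] at ht
      rw [hw] at ht
      omega
    have hz2αβ : z ^ 2 = α ^ 2 + (s + α) ^ 2 := by
      have e3 : α ^ 2 + (s + α) ^ 2 = s ^ 2 + 2 * (α * (s + α)) := by ring
      have hy2w : y ^ 2 = 4 * w ^ 2 := by rw [hw]; ring
      omega
    have hcopst : Nat.Coprime s t := by
      have := hcopC
      rw [ht] at this
      rw [hs] at this
      exact (Nat.coprime_pow_left_iff (by norm_num) _ _).mp
        ((Nat.coprime_pow_right_iff (by norm_num) _ _).mp this)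
    have hcopαβ : Nat.Coprime α (s + α) := by
      apply coprime_aux
      intro p hp h1 h2
      have hps : p ∣ s := by
        have := Nat.dvd_sub h2 h1
        simpa using this
      have hpt : p ∣ t := by rw [hα]; exact Nat.dvd_add hps (Dvd.dvd.mul_left h1 2)
      exact prime_not_dvd_one hp (Nat.dvd_gcd hps hpt |>.trans (by rw [hcopst]))
    rcases Nat.even_or_odd α with hαev | hαodd
    · -- α even, s + α odd
      have hαe : α % 2 = 0 := Nat.even_iff.mp hαev
      obtain ⟨γ, hγ⟩ : ∃ γ, α = 2 * γ := ⟨α / 2, by omega⟩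
      have hγpos : 0 < γ := by omega
      have hγprod : γ * (s + α) = w ^ 2 := by
        have e : α * (s + α) = 2 * (γ * (s + α)) := by rw [hγ]; ring
        omega
      have hcopγ : Nat.Coprime γ (s + α) :=
        Nat.Coprime.coprime_dvd_left ⟨2, by omega⟩ hcopαβ
      obtain ⟨m, hm⟩ := pow_split 2 hcopγ hγprod
      obtain ⟨n, hnn⟩ := pow_split 2 hcopγ.symm (by rw [mul_comm]; exact hγprod)
      have hmpos : 0 < m := by
        rcases Nat.eq_zero_or_pos m with rfl | h'
        · simp at hm; omega
        · exact h'
      have hnodd : n % 2 = 1 := by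
        have h1 : (s + α) % 2 = 1 := by omega
        have := sqpar n; omega
      have hzeq : z ^ 2 = 4 * m ^ 4 + n ^ 4 := by
        have a1 : α = 2 * m ^ 2 := by rw [hγ, hm]
        have a2 : α ^ 2 = 4 * m ^ 4 := by rw [a1]; ring
        have a3 : (s + α) ^ 2 = n ^ 4 := by rw [hnn]; ring
        omega
      have hcomn : Nat.Coprime m n := by
        have hmd : m ∣ γ := hm ▸ dvd_pow_self m two_ne_zero
        have hnd : n ∣ s + α := hnn ▸ dvd_pow_self n two_ne_zero
        exact Nat.Coprime.coprime_dvd_right hnd (Nat.Coprime.coprime_dvd_left hmd hcopγ)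
      obtain ⟨e, f, hepos, heq, hfz⟩ := aux_step z m n hmpos hnodd hzeq hcomn
      exact IH f hfz n e (by omega) hepos heq
    · -- α odd, s + α even
      have hαo : α % 2 = 1 := Nat.odd_iff.mp hαodd
      obtain ⟨γ, hγ⟩ : ∃ γ, s + α = 2 * γ := ⟨(s + α) / 2, by omega⟩
      have hγpos : 0 < γ := by omega
      have hγprod : α * γ = w ^ 2 := by
        have e : α * (s + α) = 2 * (α * γ) := by rw [hγ]; ring
        omega
      have hcopγ : Nat.Coprime α γ := by
        have : γ ∣ s + α := ⟨2, by omega⟩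
        exact Nat.Coprime.coprime_dvd_right this hcopαβ
      obtain ⟨n, hnn⟩ := pow_split 2 hcopγ hγprod
      obtain ⟨m, hm⟩ := pow_split 2 hcopγ.symm (by rw [mul_comm]; exact hγprod)
      have hmpos : 0 < m := by
        rcases Nat.eq_zero_or_pos m with rfl | h'
        · simp at hm; omega
        · exact h'
      have hnodd : n % 2 = 1 := by
        have := sqpar n; omega
      have hzeq : z ^ 2 = 4 * m ^ 4 + n ^ 4 := by
        have a1 : s + α = 2 * m ^ 2 := by rw [hγ, hm]
        have a2 : (s + α) ^ 2 = 4 * m ^ 4 := by rw [a1]; ring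
        have a3 : α ^ 2 = n ^ 4 := by rw [hnn]; ring
        omega
      have hcomn : Nat.Coprime m n := by
        have hmd : m ∣ γ := hm ▸ dvd_pow_self m two_ne_zero
        have hnd : n ∣ α := hnn ▸ dvd_pow_self n two_ne_zero
        exact Nat.Coprime.coprime_dvd_right hnd
          (Nat.Coprime.coprime_dvd_left hmd hcopγ.symm)
      obtain ⟨e, f, hepos, heq, hfz⟩ := aux_step z m n hmpos hnodd hzeq hcomn
      exact IH f hfz n e (by omega) hepos heq

theorem no_sol_z4_sub_y4_eq_x2 :
    ¬ ∃ x y z : ℕ, 0 < x ∧ 0 < y ∧ 0 < z ∧ z ^ 4 - y ^ 4 = x ^ 2 := by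
  rintro ⟨x, y, z, hx, hy, hz, h⟩
  have hx2 : 0 < x ^ 2 := pow_pos hx 2
  rcases le_or_gt (z ^ 4) (y ^ 4) with hle | hlt
  · omega
  · exact descent z x y hx hy (by omega)
end

section
/- (Schur's lemma / weak Schur theorem) If the positive integers are partitioned into finitely many classes (i.e., colored by a function f : ℕ+ → Fin t for some t), then there exist positive integers a < b < c lying in the same class with a + b = c. -/
theorem weak_schur (t : ℕ) (f : ℕ+ → Fin t) :
    ∃ a b c : ℕ+, a < b ∧ b < c ∧ a + b = c ∧ f a = f b ∧ f b = f c := by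
  obtain ⟨C, ⟨i, rfl⟩, a, hFS⟩ :=
    Hindman.exists_FS_of_finite_cover (M := ℕ+)
      (Set.range fun i : Fin t => f ⁻¹' {i}) (Set.finite_range _)
      (fun n _ => ⟨f ⁻¹' {f n}, ⟨f n, rfl⟩, rfl⟩)
  -- key elements of FS a
  have h0 : a.head ∈ Hindman.FS a := Hindman.FS.head a
  have h12 : a.tail.head + a.tail.tail.head ∈ Hindman.FS a.tail :=
    Hindman.FS.cons _ _ (Hindman.FS.head _)
  have h123 : a.tail.head + (a.tail.tail.head + a.tail.tail.tail.head) ∈ Hindman.FS a.tail :=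
    Hindman.FS.cons _ _ (Hindman.FS.cons _ _ (Hindman.FS.head _))
  have key : ∀ v : ℕ+, v ∈ Hindman.FS a.tail → a.head ≠ v →
      ∃ x y z : ℕ+, x < y ∧ y < z ∧ x + y = z ∧ f x = f y ∧ f y = f z := by
    intro v hv hne
    have hu : f a.head = i := hFS h0
    have hv' : f v = i := hFS (Hindman.FS.tail _ _ hv)
    have hs : f (a.head + v) = i := hFS (Hindman.FS.cons _ _ hv)
    rcases lt_or_gt_of_ne hne with h | h
    · exact ⟨a.head, v, a.head + v, h, lt_add_of_pos_left _ a.head.2, rfl,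
        hu.trans hv'.symm, hv'.trans hs.symm⟩
    · exact ⟨v, a.head, a.head + v, h, lt_add_of_pos_right _ v.2, add_comm _ _,
        hv'.trans hu.symm, hu.trans hs.symm⟩
  by_cases hne : a.head = a.tail.head + a.tail.tail.head
  · refine key _ h123 ?_
    intro h
    rw [hne, ← add_assoc] at h
    exact absurd h (ne_of_lt (lt_add_of_pos_right _ a.tail.tail.tail.head.2))
  · exact key _ h12 hne
end

section
/- (Schur's theorem, finite version) For every integer t > 0 there exists an integer s such that for any coloring of {1, ..., s} with t colors there exist a, b, c with 1 ≤ a < b < c ≤ s, a + b = c, and a, b, c all the same color. -/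
open Hindman in
theorem schur_infinite_aux (t : ℕ) (f : ℕ → Fin t) (ht : 0 < t) :
    ∃ a b c : ℕ, 1 ≤ a ∧ a < b ∧ b < c ∧ a + b = c ∧ f a = f b ∧ f b = f c := by
  obtain ⟨cl, hcl, a, hFS⟩ := Hindman.exists_FS_of_finite_cover
    ((fun i : Fin t => {n : ℕ+ | f ↑n = i}) '' Set.univ)
    ((Set.finite_univ).image _)
    (by intro n _; exact ⟨_, ⟨f ↑n, trivial, rfl⟩, rfl⟩)
  obtain ⟨i, -, rfl⟩ := hcl
  set x0 := a.get 0 with hx0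
  set x1 := a.get 1 with hx1
  set x2 := a.get 2 with hx2
  have h0 : x0 ∈ FS a := Hindman.FS.singleton a 0
  have h1 : x1 ∈ FS a := Hindman.FS.singleton a 1
  have h02 : x0 + x2 ∈ FS a := Hindman.FS.add_two a 0 2 (by norm_num)
  have h12 : x1 + x2 ∈ FS a := Hindman.FS.add_two a 1 2 (by norm_num)
  have h012 : x0 + (x1 + x2) ∈ FS a := by
    have h' : a.tail.get 0 + a.tail.get 1 ∈ FS a.tail :=
      Hindman.FS.add_two a.tail 0 1 (by norm_num)
    have := Hindman.FS.cons a _ h'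
    convert this using 2 <;> rfl
  have key : ∀ p q : ℕ+, p ∈ FS a → q ∈ FS a → p + q ∈ FS a → p < q →
      ∃ a b c : ℕ, 1 ≤ a ∧ a < b ∧ b < c ∧ a + b = c ∧ f a = f b ∧ f b = f c := by
    intro p q hp hq hpq hlt
    refine ⟨↑p, ↑q, ↑(p + q), p.one_le, by exact_mod_cast hlt, ?_, by push_cast; ring, ?_, ?_⟩
    · have : q < p + q := PNat.lt_add_left q p
      exact_mod_cast this
    · have e1 := hFS hp; have e2 := hFS hq
      simp only [Set.mem_setOf_eq] at e1 e2; rw [e1, e2]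
    · have e2 := hFS hq; have e3 := hFS hpq
      simp only [Set.mem_setOf_eq] at e2 e3; rw [e2, e3]
  rcases lt_trichotomy x0 (x1 + x2) with hc | hc | hc
  · exact key x0 (x1 + x2) h0 h12 h012 hc
  · refine key x1 (x0 + x2) h1 h02 ?_ ?_
    · have : x1 + (x0 + x2) = x0 + (x1 + x2) := by ring
      rwa [this]
    · rw [hc]; calc x1 < x1 + (x2 + x2) := PNat.lt_add_right _ _
        _ = x1 + x2 + x2 := by ring
  · refine key (x1 + x2) x0 h12 h0 ?_ hc
    have : x1 + x2 + x0 = x0 + (x1 + x2) := by ring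
    rwa [this]

theorem schur_finite (t : ℕ) (ht : 0 < t) :
    ∃ s : ℕ, ∀ f : ℕ → Fin t, ∃ a b c : ℕ,
      1 ≤ a ∧ a < b ∧ b < c ∧ c ≤ s ∧ a + b = c ∧ f a = f b ∧ f b = f c := by
  by_contra h
  push_neg at h
  choose F hF using h
  let U : Ultrafilter ℕ := Ultrafilter.of Filter.atTop
  have hU : ∀ n, ∃ i : Fin t, {s | F s n = i} ∈ U := by
    intro n
    obtain ⟨i, hi⟩ := Ultrafilter.eq_pure_of_finite (U.map fun s => F s n)
    refine ⟨i, ?_⟩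
    have : {i} ∈ U.map fun s => F s n := by rw [hi]; exact Filter.mem_pure.mpr rfl
    exact Ultrafilter.mem_map.mp this
  choose g hg using hU
  obtain ⟨a, b, c, h1, h2, h3, h4, h5, h6⟩ := schur_infinite_aux t g ht
  have hmem : {s | F s a = g a} ∩ ({s | F s b = g b} ∩ ({s | F s c = g c} ∩ {s | c ≤ s})) ∈ U :=
    Filter.inter_mem (hg a) (Filter.inter_mem (hg b)
      (Filter.inter_mem (hg c) (Ultrafilter.of_le Filter.atTop (Filter.mem_atTop c))))
  obtain ⟨s, hsa, hsb, hsc, hs⟩ := Ultrafilter.nonempty_of_mem hmem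
  exact hF s a b c h1 h2 h3 hs h4 (by rw [hsa, hsb, h5]) (by rw [hsb, hsc, h6])
end
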